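/- arXiv:1512.08083 — 2 statements merged into one kernel-verified Lean document; each statement's English description precedes it below -/
import Mathlib

section
/- Reset monotonicity for the circulate reset: let B > m > 0 and let L = (z₁, z₂, z₃) ∈ ℝ³ with each |z_i| ≤ B, and let the reset map send the state (t, t_p, L) to (t, t, (z₂, z₃, t−t_p)), where m < t − t_p ≤ B. Then for any ζ > 0 and any φ_{z,1}, φ_{z,2}, φ_{z,3} > 0 with φ_p · m ≥ ζ + √(12 B²) · (φ_{z,1} + φ_{z,2} + φ_{z,3}), the vector φ = (0, φ_p, φ_{z,1}, φ_{z,2}, φ_{z,3}) satisfies φ · (x⁺ − x⁻) ≥ ζ, where x⁻ = (t, t_p, z₁, z₂, z₃) and x⁺ = (t, t, z₂, z₃, t − t_p). -/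
/-!
Each of the three differences `z₂ - z₁`, `z₃ - z₂`, `(t - t_p) - z₃` is a difference of two
reals of absolute value at most `B`, hence at least `-2B ≥ -√(12 B²)`. So the `z`-part of
`φ · (x⁺ - x⁻)` is at least `-√(12 B²) (φ_{z,1} + φ_{z,2} + φ_{z,3})`, while the `t_p`-part
is `φ_p (t - t_p) ≥ φ_p m`; the hypothesis on `φ_p` makes the total at least `ζ`.
-/

lemma two_mul_le_sqrt_twelve_mul_sq (B : ℝ) : 2 * B ≤ √(12 * B ^ 2) :=
  calc 2 * B ≤ |2 * B| := le_abs_self _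
    _ = √((2 * B) ^ 2) := (Real.sqrt_sq_eq_abs _).symm
    _ ≤ √(12 * B ^ 2) := Real.sqrt_le_sqrt (by nlinarith [sq_nonneg B])

lemma neg_two_mul_le_sub_of_abs_le {a b B : ℝ} (ha : |a| ≤ B) (hb : |b| ≤ B) :
    -(2 * B) ≤ b - a := by
  linarith [neg_abs_le b, le_abs_self a]

lemma neg_sqrt_twelve_mul_sq_mul_le_mul_sub {a b B φ : ℝ} (hφ : 0 ≤ φ)
    (ha : |a| ≤ B) (hb : |b| ≤ B) : -(√(12 * B ^ 2) * φ) ≤ φ * (b - a) := by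
  have hdiff : -√(12 * B ^ 2) ≤ b - a :=
    (neg_le_neg (two_mul_le_sqrt_twelve_mul_sq B)).trans (neg_two_mul_le_sub_of_abs_le ha hb)
  nlinarith

theorem tcfi_reset_monotonicity_general
    (m B : ℝ) (hm : 0 < m)
    (t tp z₁ z₂ z₃ : ℝ)
    (hz₁ : |z₁| ≤ B) (hz₂ : |z₂| ≤ B) (hz₃ : |z₃| ≤ B)
    (hlow : m < t - tp) (hhigh : t - tp ≤ B)
    (ζ φp φz₁ φz₂ φz₃ : ℝ) (hζ : 0 < ζ)
    (hφz₁ : 0 < φz₁) (hφz₂ : 0 < φz₂) (hφz₃ : 0 < φz₃)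
    (hφp : φp * m ≥ ζ + Real.sqrt (12 * B ^ 2) * (φz₁ + φz₂ + φz₃)) :
    0 * (t - t) + φp * (t - tp) + φz₁ * (z₂ - z₁) + φz₂ * (z₃ - z₂) +
      φz₃ * ((t - tp) - z₃) ≥ ζ := by
  have hinterval : |t - tp| ≤ B := abs_le.mpr ⟨by linarith [neg_abs_le z₁], hhigh⟩
  have hφp_pos : 0 < φp :=
    pos_of_mul_pos_left (lt_of_lt_of_le (by positivity) hφp) hm.le
  have hgain : φp * m ≤ φp * (t - tp) := mul_le_mul_of_nonneg_left hlow.le hφp_pos.le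
  linarith [neg_sqrt_twelve_mul_sq_mul_le_mul_sub hφz₁.le hz₁ hz₂,
    neg_sqrt_twelve_mul_sq_mul_le_mul_sub hφz₂.le hz₂ hz₃,
    neg_sqrt_twelve_mul_sq_mul_le_mul_sub hφz₃.le hz₃ hinterval]

/-- **Reset monotonicity for the circulate reset (TCFI discriminator).**
Let `0 < m < B`, `L = (z₁, z₂, z₃)` with `|zᵢ| ≤ B`, and let the reset send
`x⁻ = (t, t_p, z₁, z₂, z₃)` to `x⁺ = (t, t, z₂, z₃, t − t_p)`, where
`m < t − t_p ≤ B`. Then for any `ζ > 0` and positive `φ_{z,i}` with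
`φ_p * m ≥ ζ + √(12 B²) * (φ_{z,1} + φ_{z,2} + φ_{z,3})`, the vector
`φ = (0, φ_p, φ_{z,1}, φ_{z,2}, φ_{z,3})` satisfies `φ · (x⁺ − x⁻) ≥ ζ`. -/
theorem tcfi_reset_monotonicity
    (m B : ℝ) (hm : 0 < m) (hmB : m < B)
    (t tp z₁ z₂ z₃ : ℝ)
    (hz₁ : |z₁| ≤ B) (hz₂ : |z₂| ≤ B) (hz₃ : |z₃| ≤ B)
    (hlow : m < t - tp) (hhigh : t - tp ≤ B)
    (ζ φp φz₁ φz₂ φz₃ : ℝ) (hζ : 0 < ζ)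
    (hφz₁ : 0 < φz₁) (hφz₂ : 0 < φz₂) (hφz₃ : 0 < φz₃)
    (hφp : φp * m ≥ ζ + Real.sqrt (12 * B ^ 2) * (φz₁ + φz₂ + φz₃)) :
    0 * (t - t) + φp * (t - tp) + φz₁ * (z₂ - z₁) + φz₂ * (z₃ - z₂) +
      φz₃ * ((t - tp) - z₃) ≥ ζ :=
  tcfi_reset_monotonicity_general m B hm t tp z₁ z₂ z₃ hz₁ hz₂ hz₃ hlow hhigh ζ φp φz₁ φz₂ φz₃ hζ
    hφz₁ hφz₂ hφz₃ hφp
end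

section
/- Mixed reset monotonicity for mixed simultaneous jumps: let I be a finite index set partitioned as K_= ∪ K_≠ ∪ K₀. For each i ∈ K_≠ suppose φⁱ · (x^{i,+} − x^{i,−}) ≥ εⁱ ‖x^{i,+} − x^{i,−}‖ with εⁱ > 0; for each i ∈ K_= suppose φⁱ · (x^{i,+} − x^{i,−}) ≥ ζⁱ > 0 and ‖x^{i,+} − x^{i,−}‖ ≤ Bⁱ with Bⁱ > 0; for each i ∈ K₀ suppose x^{i,+} = x^{i,−}. Define ε = min( min_{i∈K_≠} εⁱ, min_{i∈K_=} ζⁱ/Bⁱ ) (over the nonempty parts). Then φ · (x⁺ − x⁻) ≥ ε · ‖x⁺ − x⁻‖, where φ, x⁺, x⁻ are the concatenations. -/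
/-!
Every block that moves satisfies `⟪φⁱ, dⁱ⟫ ≥ ε ‖dⁱ‖`; for a jump within a mode this is because
`‖dⁱ‖ ≤ Bⁱ` turns `⟪φⁱ, dⁱ⟫ ≥ ζⁱ` into `⟪φⁱ, dⁱ⟫ ≥ (ζⁱ / Bⁱ) ‖dⁱ‖`. Summing over the blocks and
using `‖d‖ ≤ ∑ ‖dⁱ‖` gives the bound for the concatenation.
-/

open Finset

theorem PiLp.norm_le_sum_norm_of_L2 {ι : Type*} [Fintype ι] {β : ι → Type*}
    [∀ i, SeminormedAddCommGroup (β i)] (x : PiLp 2 β) : ‖x‖ ≤ ∑ i, ‖x i‖ := by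
  refine le_of_pow_le_pow_left₀ two_ne_zero (sum_nonneg fun i _ => norm_nonneg _) ?_
  rw [PiLp.norm_sq_eq_of_L2]
  exact sum_sq_le_sq_sum_of_nonneg fun i _ => norm_nonneg _

theorem PiLp.inf'_mul_norm_le_inner {ι : Type*} [Fintype ι] {E : ι → Type*}
    [∀ i, NormedAddCommGroup (E i)] [∀ i, InnerProductSpace ℝ (E i)]
    (φ x : PiLp 2 E) (S : Finset ι) (hS : S.Nonempty) (c : ι → ℝ)
    (hc : ∀ i ∈ S, 0 ≤ c i ∧ c i * ‖x i‖ ≤ inner ℝ (φ i) (x i))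
    (hx : ∀ i ∉ S, x i = 0) :
    S.inf' hS c * ‖x‖ ≤ inner ℝ φ x := by
  set ε := S.inf' hS c
  have hε : 0 ≤ ε := (le_inf'_iff hS c).2 fun i hi => (hc i hi).1
  have hblock : ∀ i, ε * ‖x i‖ ≤ inner ℝ (φ i) (x i) := by
    intro i
    by_cases hi : i ∈ S
    · exact (mul_le_mul_of_nonneg_right (inf'_le c hi) (norm_nonneg _)).trans (hc i hi).2
    · simp [hx i hi]
  calc ε * ‖x‖ ≤ ε * ∑ i, ‖x i‖ := mul_le_mul_of_nonneg_left x.norm_le_sum_norm_of_L2 hε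
    _ = ∑ i, ε * ‖x i‖ := mul_sum _ _ _
    _ ≤ ∑ i, inner ℝ (φ i) (x i) := sum_le_sum fun i _ => hblock i
    _ = inner ℝ φ x := (PiLp.inner_apply φ x).symm

theorem div_mul_le_of_le_of_le {ζ B t s : ℝ} (hζ : 0 ≤ ζ) (hB : 0 < B) (ht : t ≤ B)
    (hs : ζ ≤ s) : ζ / B * t ≤ s :=
  calc ζ / B * t ≤ ζ / B * B := mul_le_mul_of_nonneg_left ht (div_nonneg hζ hB.le)
    _ = ζ := div_mul_cancel₀ ζ hB.ne'
    _ ≤ s := hs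

theorem parallel_reset_monotonicity_mixed_general
    (I : Type) [Fintype I] [DecidableEq I] (n : I → ℕ)
    (φ xminus xplus : PiLp 2 (fun i => EuclideanSpace ℝ (Fin (n i))))
    (Kneq Keq K0 : Finset I)
    (hcover : Kneq ∪ Keq ∪ K0 = Finset.univ)
    (εf ζ B : I → ℝ)
    (hne : (Kneq ∪ Keq).Nonempty)
    (hKneq : ∀ i ∈ Kneq, 0 < εf i ∧
      (inner ℝ (φ i) (xplus i - xminus i) : ℝ) ≥ εf i * ‖xplus i - xminus i‖)
    (hKeq : ∀ i ∈ Keq, 0 < ζ i ∧ 0 < B i ∧ ‖xplus i - xminus i‖ ≤ B i ∧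
      (inner ℝ (φ i) (xplus i - xminus i) : ℝ) ≥ ζ i)
    (hK0 : ∀ i ∈ K0, xplus i = xminus i) :
    (inner ℝ φ (xplus - xminus) : ℝ) ≥
      ((Kneq ∪ Keq).inf' hne fun i => if i ∈ Kneq then εf i else ζ i / B i) *
        ‖xplus - xminus‖ := by
  refine PiLp.inf'_mul_norm_le_inner φ (xplus - xminus) _ hne _ (fun i hi => ?_) fun i hi => ?_
  · by_cases hi' : i ∈ Kneq
    · obtain ⟨hε, hbound⟩ := hKneq i hi'
      simpa [hi'] using ⟨hε.le, hbound⟩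
    · obtain ⟨hζ, hB, hdB, hbound⟩ := hKeq i ((mem_union.1 hi).resolve_left hi')
      simpa [hi'] using ⟨(div_pos hζ hB).le, div_mul_le_of_le_of_le hζ.le hB hdB hbound⟩
  · have hcovered : i ∈ Kneq ∪ Keq ∪ K0 := hcover ▸ mem_univ i
    simp [hK0 i ((mem_union.1 hcovered).resolve_left hi)]

/-- **Mixed reset monotonicity for mixed simultaneous jumps (Case 2 of
the parallel composition theorem for STORMED systems).** The finite index
set `I` is partitioned into `Keq ∪ Kneq ∪ K0`. Blocks in `Kneq` jumped
across modes (`⟪φⁱ, dⁱ⟫ ≥ εⁱ ‖dⁱ‖`), blocks in `Keq` jumped within a mode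
(`⟪φⁱ, dⁱ⟫ ≥ ζⁱ` and `‖dⁱ‖ ≤ Bⁱ`), and blocks in `K0` did not move. With
`ε = min(min_{Kneq} εⁱ, min_{Keq} ζⁱ/Bⁱ)` taken over the nonempty parts,
the concatenated vectors (in the `L²` product space) satisfy
`⟪φ, x⁺ − x⁻⟫ ≥ ε ‖x⁺ − x⁻‖`. -/
theorem parallel_reset_monotonicity_mixed
    (I : Type) [Fintype I] [DecidableEq I] (n : I → ℕ)
    (φ xminus xplus : PiLp 2 (fun i => EuclideanSpace ℝ (Fin (n i))))
    (Kneq Keq K0 : Finset I)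
    (hd1 : Disjoint Kneq Keq) (hd2 : Disjoint Kneq K0) (hd3 : Disjoint Keq K0)
    (hcover : Kneq ∪ Keq ∪ K0 = Finset.univ)
    (εf ζ B : I → ℝ)
    (hne : (Kneq ∪ Keq).Nonempty)
    (hKneq : ∀ i ∈ Kneq, 0 < εf i ∧
      (inner ℝ (φ i) (xplus i - xminus i) : ℝ) ≥ εf i * ‖xplus i - xminus i‖)
    (hKeq : ∀ i ∈ Keq, 0 < ζ i ∧ 0 < B i ∧ ‖xplus i - xminus i‖ ≤ B i ∧
      (inner ℝ (φ i) (xplus i - xminus i) : ℝ) ≥ ζ i)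
    (hK0 : ∀ i ∈ K0, xplus i = xminus i) :
    (inner ℝ φ (xplus - xminus) : ℝ) ≥
      ((Kneq ∪ Keq).inf' hne fun i => if i ∈ Kneq then εf i else ζ i / B i) *
        ‖xplus - xminus‖ :=
  parallel_reset_monotonicity_mixed_general I n φ xminus xplus Kneq Keq K0 hcover εf ζ B hne hKneq
    hKeq hK0
end
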